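/- Let V = (V₁, V₂, V₃) be a C¹ vector field on ℝ³ with vanishing expansion, i.e. ∑_i ∂_i V_i = 0 everywhere. Then at every point x one has II[K](x) = −(1/2) ∑_{i,j} K_{ij}(x)² ≤ 0, where K_{ij} = −(∂_i V_j + ∂_j V_i)/2; moreover II[K](x) = 0 if and only if K_{ij}(x) = 0 for all i, j. Hence the Eulerian energy density E = II[K]/(8πG) of a zero-expansion Natário warp drive is everywhere nonpositive, and vanishes identically only if the extrinsic curvature vanishes identically. -/
import Mathlib


open scoped BigOperators

/-- Partial derivative `∂ᵢ f` on `ℝ³ = Fin 3 → ℝ`. -/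
noncomputable def pd (i : Fin 3) (f : (Fin 3 → ℝ) → ℝ) (x : Fin 3 → ℝ) : ℝ :=
  fderiv ℝ f x (Pi.single i 1)

/-- Extrinsic curvature `K_{ij} = -(∂ᵢVⱼ + ∂ⱼVᵢ)/2` of the R-Warp model with shift `-V`. -/
noncomputable def Kmat (V : Fin 3 → (Fin 3 → ℝ) → ℝ) (x : Fin 3 → ℝ) (i j : Fin 3) : ℝ :=
  -(pd i (V j) x + pd j (V i) x) / 2

/-- Second principal invariant `II[B] = ((tr B)² - tr(B²))/2` of a 3×3 array. -/
noncomputable def II3 (B : Fin 3 → Fin 3 → ℝ) : ℝ :=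
  ((∑ i, B i i) ^ 2 - ∑ i, ∑ j, B i j * B j i) / 2

lemma Kmat_symm (V : Fin 3 → (Fin 3 → ℝ) → ℝ) (x : Fin 3 → ℝ) (i j : Fin 3) :
    Kmat V x i j = Kmat V x j i := by
  unfold Kmat; ring

lemma Kmat_trace (V : Fin 3 → (Fin 3 → ℝ) → ℝ)
    (hdiv : ∀ x : Fin 3 → ℝ, ∑ i, pd i (V i) x = 0) (x : Fin 3 → ℝ) :
    ∑ i, Kmat V x i i = 0 := by
  have h := hdiv x
  unfold Kmat
  have : ∑ i, -(pd i (V i) x + pd i (V i) x) / 2 = -∑ i, pd i (V i) x := by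
    rw [← Finset.sum_neg_distrib]
    apply Finset.sum_congr rfl
    intro i _
    ring
  rw [this, h, neg_zero]

/-- For a C¹ vector field with vanishing expansion (`div V = 0`), at every point
`II[K] = -(1/2) ∑ K_{ij}² ≤ 0`, with equality iff `K = 0` there; hence the Eulerian
energy density `E = II[K]/(8πG)` of a zero-expansion Natário warp drive is
everywhere nonpositive. -/
theorem zero_expansion_natario_energy_nonpositive
    (G : ℝ) (hG : 0 < G)
    (V : Fin 3 → (Fin 3 → ℝ) → ℝ)
    (hV : ∀ i, ContDiff ℝ 1 (V i))
    (hdiv : ∀ x : Fin 3 → ℝ, ∑ i, pd i (V i) x = 0)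
    (x : Fin 3 → ℝ) :
    II3 (Kmat V x) = -(1/2) * ∑ i, ∑ j, (Kmat V x i j) ^ 2 ∧
    II3 (Kmat V x) ≤ 0 ∧
    (II3 (Kmat V x) = 0 ↔ ∀ i j, Kmat V x i j = 0) ∧
    II3 (Kmat V x) / (8 * Real.pi * G) ≤ 0 := by
  have htr := Kmat_trace V hdiv x
  have hmain : II3 (Kmat V x) = -(1/2) * ∑ i, ∑ j, (Kmat V x i j) ^ 2 := by
    unfold II3
    rw [htr]
    have : ∑ i, ∑ j, Kmat V x i j * Kmat V x j i
        = ∑ i, ∑ j, (Kmat V x i j) ^ 2 := by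
      apply Finset.sum_congr rfl; intro i _
      apply Finset.sum_congr rfl; intro j _
      rw [← Kmat_symm V x j i]; ring
    rw [this]; ring
  have hsum_nonneg : 0 ≤ ∑ i, ∑ j, (Kmat V x i j) ^ 2 :=
    Finset.sum_nonneg fun i _ => Finset.sum_nonneg fun j _ => sq_nonneg _
  have hle : II3 (Kmat V x) ≤ 0 := by
    rw [hmain]
    nlinarith
  refine ⟨hmain, hle, ?_, ?_⟩
  · constructor
    · intro h0 i j
      rw [hmain] at h0
      have hsum0 : ∑ i, ∑ j, (Kmat V x i j) ^ 2 = 0 := by linarith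
      have h1 : ∀ i ∈ Finset.univ, ∑ j, (Kmat V x i j) ^ 2 = 0 := by
        intro i _
        have := (Finset.sum_eq_zero_iff_of_nonneg
          (fun i _ => Finset.sum_nonneg fun j _ => sq_nonneg (Kmat V x i j))).mp hsum0
        exact this i (Finset.mem_univ i)
      have h2 := (Finset.sum_eq_zero_iff_of_nonneg
        (fun j _ => sq_nonneg (Kmat V x i j))).mp (h1 i (Finset.mem_univ i))
      have := h2 j (Finset.mem_univ j)
      exact pow_eq_zero_iff (by norm_num) |>.mp this
    · intro h
      rw [hmain]
      have : ∑ i, ∑ j, (Kmat V x i j) ^ 2 = 0 := by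
        apply Finset.sum_eq_zero; intro i _
        apply Finset.sum_eq_zero; intro j _
        rw [h i j]; ring
      rw [this]; ring
  · apply div_nonpos_of_nonpos_of_nonneg hle
    positivity
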